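/- arXiv:2403.08432 — 3 statements merged into one kernel-verified Lean document; each statement's English description precedes it below -/
import Mathlib

section
/- For all real numbers t12 and t13, the system of equations y1 - y2 = t12, y1 - y3 = t13, y1*y2*y3 = 1 has exactly one solution with y1 > 0, y2 > 0, y3 > 0. -/
theorem stmt_0 (t12 t13 : ℝ) :
    ∃! y : ℝ × ℝ × ℝ,
      0 < y.1 ∧ 0 < y.2.1 ∧ 0 < y.2.2 ∧
      y.1 - y.2.1 = t12 ∧ y.1 - y.2.2 = t13 ∧ y.1 * y.2.1 * y.2.2 = 1 := by
  set m := max 0 (max t12 t13) with hm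
  have hm0 : (0:ℝ) ≤ m := le_max_left _ _
  have hm12 : t12 ≤ m := le_trans (le_max_left _ _) (le_max_right _ _)
  have hm13 : t13 ≤ m := le_trans (le_max_right _ _) (le_max_right _ _)
  have hfm : m * (m - t12) * (m - t13) = 0 := by
    rcases max_choice 0 (max t12 t13) with h | h
    · rw [hm, h]; ring
    · rcases max_choice t12 t13 with h' | h'
      · have : m = t12 := by rw [hm, h, h']
        rw [this]; ring
      · have : m = t13 := by rw [hm, h, h']
        rw [this]; ring
  have hcont : ContinuousOn (fun x : ℝ => x * (x - t12) * (x - t13))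
      (Set.Icc m (m+1)) := by
    apply Continuous.continuousOn; continuity
  have h1 : (1:ℝ) ∈ Set.Icc (m * (m - t12) * (m - t13))
      ((m+1) * ((m+1) - t12) * ((m+1) - t13)) := by
    constructor
    · rw [hfm]; norm_num
    · nlinarith [mul_le_mul (le_refl (1:ℝ)) (show (1:ℝ) ≤ (m+1) - t13 by linarith)
        (by norm_num) (by norm_num : (0:ℝ) ≤ 1)]
  obtain ⟨x, hx, hfx⟩ := intermediate_value_Icc (by linarith : m ≤ m + 1) hcont h1
  simp only at hfx
  have hxm : m ≤ x := hx.1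
  have hx0 : 0 < x := by
    by_contra h
    push_neg at h
    have hxe : x = 0 := le_antisymm h (le_trans hm0 hxm)
    rw [hxe] at hfx; simp at hfx
  have hx12 : 0 < x - t12 := by
    by_contra h
    push_neg at h
    have hxe : x = t12 := by linarith
    rw [hxe] at hfx; simp at hfx
  have hx13 : 0 < x - t13 := by
    by_contra h
    push_neg at h
    have hxe : x = t13 := by linarith
    rw [hxe] at hfx; simp at hfx
  refine ⟨⟨x, x - t12, x - t13⟩, ⟨hx0, hx12, hx13, by ring, by ring, by simpa using hfx⟩, ?_⟩
  rintro ⟨a, b, c⟩ ⟨ha, hb, hc, h12, h13, hprod⟩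
  simp only at ha hb hc h12 h13 hprod ⊢
  have hbv : b = a - t12 := by linarith
  have hcv : c = a - t13 := by linarith
  subst hbv hcv
  have hax : a = x := by
    rcases lt_trichotomy a x with h | h | h
    · exfalso; nlinarith [mul_pos hx12 hx13, mul_pos ha hx13, mul_pos ha hb]
    · exact h
    · exfalso; nlinarith [mul_pos hb hc, mul_pos hx0 hc, mul_pos hx0 hx12]
  subst hax
  rfl
end

section
/- Let t1(λ) = μ*(λ - 1)/(2*λ^(3/2)) for λ > 0 and μ > 0. Then t1(2) = t1(3 + √5), i.e., the function t1 is not injective on (0, ∞). -/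
/-!
Write `λ = 2x²` with `x > 0`. Then `t1 (2x²) = μ (2x² - 1) / (2 · 2^{3/2} x³)`, which equals
`t1 2 = μ / (2 · 2^{3/2})` exactly when `2x² - 1 = x³`, i.e. `(x - 1)(x² - x - 1) = 0`.
The golden ratio `φ` is a root, and `2φ² = 3 + √5`.
-/

open Real goldenRatio

noncomputable def axialStress (μ l : ℝ) : ℝ := μ * (l - 1) / (2 * l ^ ((3 : ℝ) / 2))

lemma sq_rpow_three_halves {x : ℝ} (hx : 0 ≤ x) : (x ^ 2) ^ ((3 : ℝ) / 2) = x ^ 3 := by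
  rw [← rpow_natCast, ← rpow_mul hx, ← rpow_natCast]
  norm_num

lemma axialStress_mul_sq {μ c x : ℝ} (hc : 0 < c) (hx : 0 < x)
    (h : c * x ^ 2 - 1 = (c - 1) * x ^ 3) :
    axialStress μ (c * x ^ 2) = axialStress μ c := by
  have hc32 : 0 < c ^ ((3 : ℝ) / 2) := by positivity
  unfold axialStress
  rw [mul_rpow hc.le (sq_nonneg x), sq_rpow_three_halves hx.le, h]
  field_simp

theorem stmt_3_general (μ : ℝ) (t1 : ℝ → ℝ)
    (ht1 : ∀ l : ℝ, 0 < l → t1 l = μ * (l - 1) / (2 * l ^ ((3 : ℝ) / 2))) :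
    t1 2 = t1 (3 + Real.sqrt 5) ∧ ¬ Set.InjOn t1 (Set.Ioi 0) := by
  have two_mul_sq : 2 * φ ^ 2 = 3 + √5 := by
    rw [goldenRatio_sq, goldenRatio]
    ring
  have heq : t1 2 = t1 (3 + √5) := by
    rw [← two_mul_sq, ht1 2 two_pos, ht1 _ (by positivity)]
    exact (axialStress_mul_sq two_pos goldenRatio_pos
      (by linear_combination (1 - φ) * goldenRatio_sq)).symm
  refine ⟨heq, fun hinj => ?_⟩
  have hlt : (2 : ℝ) < 3 + √5 := by linarith [sqrt_nonneg 5]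
  exact hlt.ne (hinj (Set.mem_Ioi.2 two_pos) (Set.mem_Ioi.2 (by positivity)) heq)

theorem stmt_3 (μ : ℝ) (hμ : 0 < μ) (t1 : ℝ → ℝ)
    (ht1 : ∀ l : ℝ, 0 < l → t1 l = μ * (l - 1) / (2 * l ^ ((3 : ℝ) / 2))) :
    t1 2 = t1 (3 + Real.sqrt 5) ∧ ¬ Set.InjOn t1 (Set.Ioi 0) :=
  stmt_3_general μ t1 ht1
end

section
/- Let μ > 0 and let σ1, σ2, σ3 be real numbers with σ1 + σ2 + σ3 = 0. If α1, α2, α3 > 0 satisfy σi − σj = μ(αi − αj) for all i, j and α1α2α3 = 1, then αj = σj/μ + ξ/μ where ξ = μ(α1+α2+α3)/3, and ξ is the maximal real root of ξ³ + K̄2 ξ + K̄3 − μ³ = 0 with K̄2 = −(σ1²+σ2²+σ3²)/2, K̄3 = σ1σ2σ3. -/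
theorem stmt_13 (μ σ1 σ2 σ3 : ℝ) (hμ : 0 < μ) (hsum : σ1 + σ2 + σ3 = 0)
    (α1 α2 α3 : ℝ) (h1 : 0 < α1) (h2 : 0 < α2) (h3 : 0 < α3)
    (h12 : σ1 - σ2 = μ * (α1 - α2))
    (h13 : σ1 - σ3 = μ * (α1 - α3))
    (h23 : σ2 - σ3 = μ * (α2 - α3))
    (hinc : α1 * α2 * α3 = 1)
    (ξ K2 K3 : ℝ)
    (hξ : ξ = μ * (α1 + α2 + α3) / 3)
    (hK2 : K2 = -(σ1 ^ 2 + σ2 ^ 2 + σ3 ^ 2) / 2)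
    (hK3 : K3 = σ1 * σ2 * σ3) :
    α1 = σ1 / μ + ξ / μ ∧ α2 = σ2 / μ + ξ / μ ∧ α3 = σ3 / μ + ξ / μ ∧
    ξ ^ 3 + K2 * ξ + K3 - μ ^ 3 = 0 ∧
    ∀ y : ℝ, y ^ 3 + K2 * y + K3 - μ ^ 3 = 0 → y ≤ ξ := by
  have hμ0 : μ ≠ 0 := ne_of_gt hμ
  have e1 : μ * α1 = σ1 + ξ := by linear_combination -(h12 + h13 + hsum) / 3 - hξ
  have e2 : μ * α2 = σ2 + ξ := by linear_combination (h12 - h23 - hsum) / 3 - hξ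
  have e3 : μ * α3 = σ3 + ξ := by linear_combination (h13 + h23 - hsum) / 3 - hξ
  have P : (σ1 + ξ) * (σ2 + ξ) * (σ3 + ξ) = μ ^ 3 := by
    calc (σ1 + ξ) * (σ2 + ξ) * (σ3 + ξ) = (μ * α1) * (μ * α2) * (μ * α3) := by
          rw [e1, e2, e3]
      _ = μ ^ 3 * (α1 * α2 * α3) := by ring
      _ = μ ^ 3 := by rw [hinc]; ring
  refine ⟨by field_simp; linear_combination e1, by field_simp; linear_combination e2,
    by field_simp; linear_combination e3, ?_, ?_⟩
  · rw [hK2, hK3]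
    linear_combination P - (ξ ^ 2 + ξ * (σ1 + σ2 + σ3) / 2) * hsum
  · intro y hy
    by_contra hlt
    push_neg at hlt
    have hy' : (y + σ1) * (y + σ2) * (y + σ3) = μ ^ 3 := by
      rw [hK2, hK3] at hy
      linear_combination hy + (y ^ 2 + y * (σ1 + σ2 + σ3) / 2) * hsum
    have p1 : σ1 + ξ > 0 := by nlinarith [mul_pos hμ h1]
    have p2 : σ2 + ξ > 0 := by nlinarith [mul_pos hμ h2]
    have p3 : σ3 + ξ > 0 := by nlinarith [mul_pos hμ h3]
    have hd : 0 < y - ξ := sub_pos.2 hlt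
    nlinarith [mul_pos (mul_pos hd p1) p2, mul_pos (mul_pos hd p2) p3,
      mul_pos (mul_pos hd p1) p3, mul_pos (mul_pos hd hd) p1,
      mul_pos (mul_pos hd hd) p2, mul_pos (mul_pos hd hd) p3,
      mul_pos (mul_pos hd hd) hd, P, hy']
end
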